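/- Suppose a one-sided boundary labelling instance (n sites inside rectangle B, n ports on the top side) admits a solution in which leaders may cross each other. Then it also admits a crossing-free (planar) solution using 1-bend leaders. -/
import Mathlib


open Set MeasureTheory

abbrev Pt : Type := ℝ × ℝ

/-- An axis-aligned rectangle. -/
structure Rect where
  x0 : ℝ
  x1 : ℝ
  y0 : ℝ
  y1 : ℝ
  hx : x0 < x1
  hy : y0 < y1

/-- The open interior of a rectangle. -/
def Rect.inter (B : Rect) : Set Pt := Set.Ioo B.x0 B.x1 ×ˢ Set.Ioo B.y0 B.y1

/-- The closed rectangle as a point set. -/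
def Rect.closed (B : Rect) : Set Pt := Set.Icc B.x0 B.x1 ×ˢ Set.Icc B.y0 B.y1

/-- The (closed) top side of a rectangle. -/
def Rect.topSide (R : Rect) : Set Pt := {p | p.2 = R.y1 ∧ p.1 ∈ Set.Icc R.x0 R.x1}

/-- The (closed) left side of a rectangle. -/
def Rect.leftSide (R : Rect) : Set Pt := {p | p.1 = R.x0 ∧ p.2 ∈ Set.Icc R.y0 R.y1}

/-- Horizontal segment at height `y` between abscissae `xa` and `xb`. -/
def hSeg (xa xb y : ℝ) : Set Pt := {p | p.2 = y ∧ p.1 ∈ Set.uIcc xa xb}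

/-- Vertical segment at abscissa `x` between ordinates `ya` and `yb`. -/
def vSeg (x ya yb : ℝ) : Set Pt := {p | p.1 = x ∧ p.2 ∈ Set.uIcc ya yb}

/-- 1-bend po-leader to a port on the top or bottom side: a horizontal segment
from the site followed by a vertical segment ending at the port
(either segment may be degenerate). -/
def hvLeader (s p : Pt) : Set Pt := hSeg s.1 p.1 s.2 ∪ vSeg p.1 s.2 p.2

/-- 1-bend po-leader to a port on the left or right side: a vertical segment
from the site followed by a horizontal segment ending at the port. -/
def vhLeader (s p : Pt) : Set Pt := vSeg s.1 s.2 p.2 ∪ hSeg s.1 p.1 p.2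

/-- A one-sided boundary labelling instance: `n` sites in general position in the
interior of `B` and `n` ports on the (open) top side of `B`. -/
structure OneSided (n : ℕ) where
  B : Rect
  site : Fin n → Pt
  port : Fin n → Pt
  site_mem : ∀ i, site i ∈ B.inter
  port_top : ∀ i, (port i).2 = B.y1 ∧ (port i).1 ∈ Set.Ioo B.x0 B.x1
  gp_site_x : Function.Injective fun i => (site i).1
  gp_site_y : Function.Injective fun i => (site i).2
  gp_port_x : Function.Injective fun i => (port i).1
  gp_mix : ∀ i j, (site i).1 ≠ (port j).1

/-- The leader induced by the assignment `σ` at site `i`. -/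
def OneSided.leader {n : ℕ} (P : OneSided n) (σ : Equiv.Perm (Fin n)) (i : Fin n) : Set Pt :=
  hvLeader (P.site i) (P.port (σ i))

/-- A feasible solution: every leader lies in the interior of `B` except at its
port endpoint, and the leaders are pairwise disjoint. -/
def OneSided.Feasible {n : ℕ} (P : OneSided n) (σ : Equiv.Perm (Fin n)) : Prop :=
  (∀ i, P.leader σ i \ {P.port (σ i)} ⊆ P.B.inter) ∧
  (∀ i j, i ≠ j → Disjoint (P.leader σ i) (P.leader σ j))

/-- Key real inequality for the exchange argument. -/
lemma key_ineq (ci cj a b p q : ℝ) (hcj : 0 < cj) (hc : cj < ci)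
    (hq : q ∈ Set.uIcc a p) (hqp : q ≠ p) :
    ci * |a - q| + cj * |b - p| < ci * |a - p| + cj * |b - q| := by
  have h1 : |a - q| + |q - p| = |a - p| := by
    rcases Set.mem_uIcc.mp hq with ⟨h1, h2⟩ | ⟨h1, h2⟩
    · rw [abs_of_nonpos (by linarith : a - q ≤ 0), abs_of_nonpos (by linarith : q - p ≤ 0),
        abs_of_nonpos (by linarith : a - p ≤ 0)]; ring
    · rw [abs_of_nonneg (by linarith : 0 ≤ a - q), abs_of_nonneg (by linarith : 0 ≤ q - p),
        abs_of_nonneg (by linarith : 0 ≤ a - p)]; ring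
  have h1' : ci * |a - q| + ci * |q - p| = ci * |a - p| := by rw [← mul_add, h1]
  have t : cj * |b - p| ≤ cj * (|b - q| + |q - p|) :=
    mul_le_mul_of_nonneg_left (abs_sub_le b q p) hcj.le
  have hpos : 0 < |q - p| := abs_pos.mpr (sub_ne_zero.mpr hqp)
  have := mul_lt_mul_of_pos_right hc hpos
  linarith

/-- The containment condition holds for every assignment. -/
lemma leader_subset {n : ℕ} (P : OneSided n) (σ : Equiv.Perm (Fin n)) (i : Fin n) :
    P.leader σ i \ {P.port (σ i)} ⊆ P.B.inter := by
  rintro x ⟨hx, hxne⟩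
  have hs := P.site_mem i
  have hp := P.port_top (σ i)
  simp only [Rect.inter, Set.mem_prod, Set.mem_Ioo] at hs ⊢
  rcases hx with hx | hx
  · obtain ⟨hy, hxx⟩ := hx
    have h1 := hxx.1
    have h2 := hxx.2
    constructor
    · constructor
      · calc P.B.x0 < min (P.site i).1 (P.port (σ i)).1 := by
              exact lt_min hs.1.1 hp.2.1
          _ ≤ x.1 := h1
      · exact lt_of_le_of_lt h2 (max_lt hs.1.2 hp.2.2)
    · rw [hy]; exact hs.2
  · obtain ⟨hx1, hx2⟩ := hx
    have huIcc : Set.uIcc (P.site i).2 (P.port (σ i)).2 =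
        Set.Icc (P.site i).2 (P.port (σ i)).2 := by
      apply Set.uIcc_of_le; rw [hp.1]; exact le_of_lt hs.2.2
    rw [huIcc] at hx2
    have hne : x.2 ≠ (P.port (σ i)).2 := by
      intro hcontra
      apply hxne
      simp only [Set.mem_singleton_iff]
      exact Prod.ext hx1 hcontra
    constructor
    · rw [hx1]; exact hp.2
    · constructor
      · exact lt_of_lt_of_le hs.2.1 hx2.1
      · rw [hp.1] at hx2 hne
        exact lt_of_le_of_ne hx2.2 hne

/-- If the horizontal segment of leader `i` meets the vertical segment of leader `j`
(for distinct `i, j`), we get a "crossing configuration". -/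
lemma hv_meet {n : ℕ} (P : OneSided n) (σ : Equiv.Perm (Fin n)) {i j : Fin n} (hij : i ≠ j)
    {x : Pt}
    (hx1 : x ∈ hSeg (P.site i).1 (P.port (σ i)).1 (P.site i).2)
    (hx2 : x ∈ vSeg (P.port (σ j)).1 (P.site j).2 (P.port (σ j)).2) :
    (P.site j).2 < (P.site i).2 ∧
      (P.port (σ j)).1 ∈ Set.uIcc (P.site i).1 (P.port (σ i)).1 := by
  obtain ⟨hy, hxx⟩ := hx1
  obtain ⟨hq, hyy⟩ := hx2
  have hsj := P.site_mem j
  have hpj := P.port_top (σ j)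
  simp only [Rect.inter, Set.mem_prod, Set.mem_Ioo] at hsj
  have huIcc : Set.uIcc (P.site j).2 (P.port (σ j)).2 =
      Set.Icc (P.site j).2 (P.port (σ j)).2 := by
    apply Set.uIcc_of_le; rw [hpj.1]; exact le_of_lt hsj.2.2
  rw [huIcc] at hyy
  have hle : (P.site j).2 ≤ (P.site i).2 := by rw [← hy]; exact hyy.1
  have hne : (P.site j).2 ≠ (P.site i).2 := fun hcontra => hij (P.gp_site_y hcontra).symm
  exact ⟨lt_of_le_of_ne hle hne, by rw [← hq]; exact hxx⟩

/-- Swapping the ports of a crossing pair strictly decreases the weighted length. -/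
lemma swap_lt {n : ℕ} (P : OneSided n) (σ : Equiv.Perm (Fin n)) {i j : Fin n} (hij : i ≠ j)
    (hy : (P.site j).2 < (P.site i).2)
    (hq : (P.port (σ j)).1 ∈ Set.uIcc (P.site i).1 (P.port (σ i)).1) :
    (∑ k, ((P.site k).2 - P.B.y0) * |(P.site k).1 - (P.port ((σ * Equiv.swap i j) k)).1|)
      < ∑ k, ((P.site k).2 - P.B.y0) * |(P.site k).1 - (P.port (σ k)).1| := by
  set g : Fin n → Fin n → ℝ :=
    fun k m => ((P.site k).2 - P.B.y0) * |(P.site k).1 - (P.port m).1| with hg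
  have hsum : ∀ τ : Fin n → Fin n,
      (∑ k, g k (τ k)) =
        g i (τ i) + (g j (τ j) + ∑ k ∈ (Finset.univ.erase i).erase j, g k (τ k)) := by
    intro τ
    rw [Finset.add_sum_erase _ (fun k => g k (τ k))
      (Finset.mem_erase.mpr ⟨hij.symm, Finset.mem_univ j⟩),
      Finset.add_sum_erase _ (fun k => g k (τ k)) (Finset.mem_univ i)]
  show (∑ k, g k ((σ * Equiv.swap i j) k)) < ∑ k, g k (σ k)
  rw [hsum (fun k => (σ * Equiv.swap i j) k), hsum (fun k => σ k)]
  have hrest : ∑ k ∈ (Finset.univ.erase i).erase j, g k ((σ * Equiv.swap i j) k)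
      = ∑ k ∈ (Finset.univ.erase i).erase j, g k (σ k) := by
    apply Finset.sum_congr rfl
    intro k hk
    have hki : k ≠ i := Finset.mem_erase.mp (Finset.mem_erase.mp hk).2 |>.1
    have hkj : k ≠ j := (Finset.mem_erase.mp hk).1
    rw [Equiv.Perm.mul_apply, Equiv.swap_apply_of_ne_of_ne hki hkj]
  rw [hrest]
  have hi : (σ * Equiv.swap i j) i = σ j := by
    rw [Equiv.Perm.mul_apply, Equiv.swap_apply_left]
  have hj : (σ * Equiv.swap i j) j = σ i := by
    rw [Equiv.Perm.mul_apply, Equiv.swap_apply_right]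
  rw [hi, hj]
  have hkey : g i (σ j) + g j (σ i) < g i (σ i) + g j (σ j) := by
    have hsi := P.site_mem i
    have hsj := P.site_mem j
    simp only [Rect.inter, Set.mem_prod, Set.mem_Ioo] at hsi hsj
    have hqp : (P.port (σ j)).1 ≠ (P.port (σ i)).1 := by
      intro hcontra
      exact hij (σ.injective (P.gp_port_x hcontra)).symm
    have := key_ineq ((P.site i).2 - P.B.y0) ((P.site j).2 - P.B.y0)
      (P.site i).1 (P.site j).1 (P.port (σ i)).1 (P.port (σ j)).1
      (by linarith [hsj.2.1]) (by linarith) hq hqp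
    simp only [hg]
    linarith
  linarith

theorem one_sided_planarize' {n : ℕ} (P : OneSided n) :
    ∃ σ : Equiv.Perm (Fin n), P.Feasible σ := by
  obtain ⟨σ, -, hmin⟩ := Finset.exists_min_image Finset.univ
    (fun τ : Equiv.Perm (Fin n) =>
      ∑ k, ((P.site k).2 - P.B.y0) * |(P.site k).1 - (P.port (τ k)).1|)
    ⟨1, Finset.mem_univ 1⟩
  refine ⟨σ, leader_subset P σ, ?_⟩
  intro i j hij
  rw [Set.disjoint_left]
  rintro x hxi hxj
  have hcross : ∀ a b : Fin n, a ≠ b →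
      x ∈ hSeg (P.site a).1 (P.port (σ a)).1 (P.site a).2 →
      x ∈ vSeg (P.port (σ b)).1 (P.site b).2 (P.port (σ b)).2 → False := by
    intro a b hab hxa hxb
    obtain ⟨hy, hq⟩ := hv_meet P σ hab hxa hxb
    exact absurd (hmin _ (Finset.mem_univ (σ * Equiv.swap a b)))
      (not_le.mpr (swap_lt P σ hab hy hq))
  rcases hxi with hxi | hxi <;> rcases hxj with hxj | hxj
  · -- both horizontal
    exact hij (P.gp_site_y (hxi.1.symm.trans hxj.1))
  · exact hcross i j hij hxi hxj
  · exact hcross j i hij.symm hxj hxi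
  · -- both vertical
    exact hij (σ.injective (P.gp_port_x (hxi.1.symm.trans hxj.1)))

/-- if a one-sided instance admits a solution in which leaders may
cross (each leader still lies in the interior of `B` except at its port), then it
admits a crossing-free (planar) solution. -/
theorem one_sided_planarize {n : ℕ} (P : OneSided n)
    (h : ∃ σ : Equiv.Perm (Fin n), ∀ i, P.leader σ i \ {P.port (σ i)} ⊆ P.B.inter) :
    ∃ σ : Equiv.Perm (Fin n), P.Feasible σ :=
  one_sided_planarize' P
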